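/- arXiv:1907.01270 — 3 statements merged into one kernel-verified Lean document; each statement's English description precedes it below -/
import Mathlib

section
/- For every instance of the rule (■_R^1) of LNS_Kt, i.e., with conclusion G ⇗ Γ ⇒ Δ ↗ Σ ⇒ Π,■A and premisses G ⇗ Γ ⇒ Δ,A ↗ Σ ⇒ Π,■A and G ⇗ Γ ⇒ Δ ↗ Σ ⇒ Π,■A ↙ ε ⇒ A (where G is a possibly empty context, ⇗ stands for either ↗ or ↙, and ε is the empty multiset): if the conclusion is falsifiable, then at least one of the two premisses is falsifiable. -/
/-- Formulae of tense logic: atoms (indexed by naturals), ⊥, →, □, ◇, ■, ◆. -/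
inductive Formula : Type
  | atom : ℕ → Formula
  | bot : Formula
  | imp : Formula → Formula → Formula
  | box : Formula → Formula
  | dia : Formula → Formula
  | bbox : Formula → Formula
  | bdia : Formula → Formula

def Formula.neg (A : Formula) : Formula := A.imp .bot
def Formula.and (A B : Formula) : Formula := (A.imp B.neg).neg
def Formula.or (A B : Formula) : Formula := A.neg.imp B
def Formula.top : Formula := Formula.bot.imp .bot

/-- Formulas built from atoms, ⊥, →, □, ■ only (no diamonds). -/
def Formula.NoDia : Formula → Prop
  | .atom _ => True
  | .bot => True
  | .imp A B => A.NoDia ∧ B.NoDia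
  | .box A => A.NoDia
  | .dia _ => False
  | .bbox A => A.NoDia
  | .bdia _ => False

/-- Structural connectives: `up` is ↗ and `dn` is ↙. -/
inductive Dir : Type
  | up
  | dn

/-- Linear nested sequents: a nonempty list of components `Γ ⇒ Δ`
joined by the structural connectives ↗ (`up`) and ↙ (`dn`). -/
inductive LNS : Type
  | single (Γ Δ : Multiset Formula) : LNS
  | up (Γ Δ : Multiset Formula) (S : LNS) : LNS
  | dn (Γ Δ : Multiset Formula) (S : LNS) : LNS

/-- A (possibly empty) context: a list of components, each together with the
structural connective joining it to what follows. -/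
abbrev Ctx := List (Multiset Formula × Multiset Formula × Dir)

/-- `plug G S` is the linear nested sequent `G ⇗ S` (just `S` when `G` is empty). -/
def plug : Ctx → LNS → LNS
  | [], S => S
  | (Γ, Δ, Dir.up) :: G, S => LNS.up Γ Δ (plug G S)
  | (Γ, Δ, Dir.dn) :: G, S => LNS.dn Γ Δ (plug G S)

/-- The structural connective joining the context to what follows it (none if empty). -/
def lastDir : Ctx → Option Dir
  | [] => none
  | [(_, _, d)] => some d
  | _ :: G => lastDir G

/-- Kripke forcing for tense logic. -/
def Force {W : Type} (R : W → W → Prop) (V : W → ℕ → Prop) : W → Formula → Prop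
  | w, .atom p => V w p
  | _, .bot => False
  | w, .imp A B => Force R V w A → Force R V w B
  | w, .box A => ∀ v, R w v → Force R V v A
  | w, .dia A => ∃ v, R w v ∧ Force R V v A
  | w, .bbox A => ∀ v, R v w → Force R V v A
  | w, .bdia A => ∃ v, R v w ∧ Force R V v A

/-- Conjunction of a finite multiset of formulae (empty conjunction is ⊤). -/
noncomputable def bigAnd (Γ : Multiset Formula) : Formula :=
  Γ.toList.foldr Formula.and Formula.top

/-- Disjunction of a finite multiset of formulae (empty disjunction is ⊥). -/
noncomputable def bigOr (Δ : Multiset Formula) : Formula :=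
  Δ.toList.foldr Formula.or Formula.bot

/-- The formula translation τ of a linear nested sequent. -/
noncomputable def tau : LNS → Formula
  | .single Γ Δ => (bigAnd Γ).imp (bigOr Δ)
  | .up Γ Δ S => (bigAnd Γ).imp ((bigOr Δ).or (tau S).box)
  | .dn Γ Δ S => (bigAnd Γ).imp ((bigOr Δ).or (tau S).bbox)

/-- A formula is valid if it is forced at every world of every Kripke model. -/
def Valid (A : Formula) : Prop :=
  ∀ (W : Type) (_ : Nonempty W) (R : W → W → Prop) (V : W → ℕ → Prop) (w : W),
    Force R V w A

/-- A linear nested sequent is falsifiable if its formula translation fails at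
some world of some Kripke model. -/
def Falsifiable (S : LNS) : Prop :=
  ∃ (W : Type) (_ : Nonempty W) (R : W → W → Prop) (V : W → ℕ → Prop) (w : W),
    ¬ Force R V w (tau S)

/-! The rule is sound because its second premiss alone already entails the conclusion in every
model: the new component `ε ⇒ A` reached through `↙` contributes `■(⊤ → ⋁{A})`, which is
equivalent to `■A`, a formula already on the right of the component it is attached to. Entailment
between sequents then propagates through any context. -/

section Forcing

variable {W : Type} (R : W → W → Prop) (V : W → ℕ → Prop) (w : W)

lemma force_or (X Y : Formula) :
    Force R V w (X.or Y) ↔ Force R V w X ∨ Force R V w Y := by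
  simp only [Formula.or, Formula.neg, Force]
  tauto

lemma force_foldr_or (L : List Formula) :
    Force R V w (L.foldr Formula.or Formula.bot) ↔ ∃ B ∈ L, Force R V w B := by
  induction L with
  | nil => simp [Force]
  | cons B L ih => simp only [List.foldr_cons, force_or, ih, List.mem_cons, exists_eq_or_imp]

lemma force_bigOr (Δ : Multiset Formula) :
    Force R V w (bigOr Δ) ↔ ∃ B ∈ Δ, Force R V w B := by
  simp only [bigOr, force_foldr_or, Multiset.mem_toList]

lemma force_bigAnd_zero : Force R V w (bigAnd 0) := by
  simp [bigAnd, Formula.top, Force]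

lemma force_tau_single_zero_singleton (A : Formula) :
    Force R V w (tau (.single 0 {A})) ↔ Force R V w A := by
  simp [tau, Force, force_bigAnd_zero, force_bigOr]

lemma force_tau_up (Γ Δ : Multiset Formula) (S : LNS) :
    Force R V w (tau (.up Γ Δ S)) ↔ (Force R V w (bigAnd Γ) →
      Force R V w (bigOr Δ) ∨ ∀ v, R w v → Force R V v (tau S)) := by
  simp only [tau, Force, force_or]

lemma force_tau_dn (Γ Δ : Multiset Formula) (S : LNS) :
    Force R V w (tau (.dn Γ Δ S)) ↔ (Force R V w (bigAnd Γ) →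
      Force R V w (bigOr Δ) ∨ ∀ v, R v w → Force R V v (tau S)) := by
  simp only [tau, Force, force_or]

lemma force_tau_plug_of_imp {S T : LNS}
    (hST : ∀ v, Force R V v (tau S) → Force R V v (tau T)) (G : Ctx) :
    Force R V w (tau (plug G S)) → Force R V w (tau (plug G T)) := by
  induction G generalizing w with
  | nil => exact hST w
  | cons c G ih =>
    obtain ⟨Γ, Δ, _ | _⟩ := c
    · simp only [plug, force_tau_up]
      exact fun h hΓ => (h hΓ).imp_right fun h v hv => ih v (h v hv)
    · simp only [plug, force_tau_dn]
      exact fun h hΓ => (h hΓ).imp_right fun h v hv => ih v (h v hv)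

lemma force_tau_single_of_dn_single {Θ Δ : Multiset Formula} {A : Formula}
    (hA : A.bbox ∈ Δ) (h : Force R V w (tau (.dn Θ Δ (.single 0 {A})))) :
    Force R V w (tau (.single Θ Δ)) := by
  simp only [force_tau_dn, force_tau_single_zero_singleton] at h
  exact fun hΘ => (h hΘ).elim id fun hbox => (force_bigOr R V w Δ).2 ⟨A.bbox, hA, hbox⟩

end Forcing

lemma plug_append_up (G : Ctx) (Γ Δ : Multiset Formula) (S : LNS) :
    plug (G ++ [(Γ, Δ, .up)]) S = plug G (.up Γ Δ S) := by
  induction G with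
  | nil => rfl
  | cons c G ih =>
    obtain ⟨Γ', Δ', _ | _⟩ := c <;> simp only [List.cons_append, plug, ih]

lemma Falsifiable.of_force_tau_imp {S T : LNS}
    (hST : ∀ (W : Type) (R : W → W → Prop) (V : W → ℕ → Prop) (w : W),
      Force R V w (tau S) → Force R V w (tau T))
    (hT : Falsifiable T) : Falsifiable S := by
  obtain ⟨W, hW, R, V, w, hw⟩ := hT
  exact ⟨W, hW, R, V, w, mt (hST W R V w) hw⟩

/-- Soundness of the rule (■_R^1): if the conclusion
`G ⇗ Γ ⇒ Δ ↗ Θ ⇒ Λ,■A` is falsifiable, then one of the premisses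
`G ⇗ Γ ⇒ Δ,A ↗ Θ ⇒ Λ,■A` and `G ⇗ Γ ⇒ Δ ↗ Θ ⇒ Λ,■A ↙ ε ⇒ A` is falsifiable. -/
theorem bboxR1_sound (G : Ctx) (Γ Δ Θ Λ : Multiset Formula) (A : Formula)
    (h : Falsifiable (plug G (.up Γ Δ (.single Θ (A.bbox ::ₘ Λ))))) :
    Falsifiable (plug G (.up Γ (A ::ₘ Δ) (.single Θ (A.bbox ::ₘ Λ)))) ∨
      Falsifiable (plug G (.up Γ Δ (.dn Θ (A.bbox ::ₘ Λ) (.single 0 {A})))) := by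
  right
  rw [← plug_append_up] at h ⊢
  refine h.of_force_tau_imp fun W R V w => force_tau_plug_of_imp R V w ?_ _
  exact fun v => force_tau_single_of_dn_single R V v (Multiset.mem_cons_self _ _)
end

section
/- For every instance of the restart rule (■_L^2) of LNS_Kt, i.e., with conclusion G ⇗ Γ ⇒ Δ ↗ Σ,■A ⇒ Π and premiss G ⇗ Γ,A ⇒ Δ (where G is a possibly empty context and ⇗ stands for either ↗ or ↙): if the conclusion is falsifiable, then the premiss is falsifiable. -/
/-!
A world falsifying `Γ ⇒ Δ ↗ Θ,■A ⇒ Λ` forces `Γ`, refutes `Δ` and has an `R`-successor forcing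
`■A`; looking back along that edge, the world itself forces `A`, so it falsifies `Γ,A ⇒ Δ`.
A countermodel of `G ⇗ S` is a chain of worlds falsifying the components of `G` and ending in a
world falsifying `S`, so replacing `S` by the premiss keeps the whole chain a countermodel.
-/

section Forcing

variable {W : Type} {R : W → W → Prop} {V : W → ℕ → Prop}

theorem force_and {w : W} {A B : Formula} :
    Force R V w (A.and B) ↔ Force R V w A ∧ Force R V w B := by
  simp only [Formula.and, Formula.neg, Force]
  tauto

theorem force_or_s2 {w : W} {A B : Formula} :
    Force R V w (A.or B) ↔ Force R V w A ∨ Force R V w B := by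
  simp only [Formula.or, Formula.neg, Force]
  tauto

theorem force_foldr_and {w : W} (l : List Formula) :
    Force R V w (l.foldr Formula.and Formula.top) ↔ ∀ B ∈ l, Force R V w B := by
  induction l with
  | nil => simp [Formula.top, Force]
  | cons a l ih => simp [force_and, ih]

theorem force_bigAnd {w : W} (Γ : Multiset Formula) :
    Force R V w (bigAnd Γ) ↔ ∀ B ∈ Γ, Force R V w B := by
  simp only [bigAnd, force_foldr_and, Multiset.mem_toList]

theorem not_force_tau_single {w : W} {Γ Δ : Multiset Formula} :
    ¬ Force R V w (tau (.single Γ Δ)) ↔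
      (∀ B ∈ Γ, Force R V w B) ∧ ¬ Force R V w (bigOr Δ) := by
  simp only [tau, Force, force_bigAnd, Classical.not_imp]

theorem not_force_tau_up {w : W} {Γ Δ : Multiset Formula} {S : LNS} :
    ¬ Force R V w (tau (.up Γ Δ S)) ↔
      (∀ B ∈ Γ, Force R V w B) ∧ ¬ Force R V w (bigOr Δ) ∧
        ∃ u, R w u ∧ ¬ Force R V u (tau S) := by
  simp only [tau, Force, force_bigAnd, force_or_s2, Classical.not_imp, not_or, not_forall]

theorem not_force_tau_dn {w : W} {Γ Δ : Multiset Formula} {S : LNS} :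
    ¬ Force R V w (tau (.dn Γ Δ S)) ↔
      (∀ B ∈ Γ, Force R V w B) ∧ ¬ Force R V w (bigOr Δ) ∧
        ∃ u, R u w ∧ ¬ Force R V u (tau S) := by
  simp only [tau, Force, force_bigAnd, force_or_s2, Classical.not_imp, not_or, not_forall]

theorem not_force_tau_plug_of_forall {S S' : LNS}
    (hS : ∀ v, ¬ Force R V v (tau S) → ¬ Force R V v (tau S')) :
    ∀ (G : Ctx) (w : W), ¬ Force R V w (tau (plug G S)) → ¬ Force R V w (tau (plug G S'))
  | [], w, h => hS w h
  | (_, _, .up) :: G, w, h => by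
    obtain ⟨hΓ, hΔ, u, hwu, hu⟩ := not_force_tau_up.mp h
    exact not_force_tau_up.mpr ⟨hΓ, hΔ, u, hwu, not_force_tau_plug_of_forall hS G u hu⟩
  | (_, _, .dn) :: G, w, h => by
    obtain ⟨hΓ, hΔ, u, huw, hu⟩ := not_force_tau_dn.mp h
    exact not_force_tau_dn.mpr ⟨hΓ, hΔ, u, huw, not_force_tau_plug_of_forall hS G u hu⟩

theorem not_force_tau_cons_of_not_force_tau_up_bbox {v : W} {Γ Δ Θ Λ : Multiset Formula}
    {A : Formula} (h : ¬ Force R V v (tau (.up Γ Δ (.single (A.bbox ::ₘ Θ) Λ)))) :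
    ¬ Force R V v (tau (.single (A ::ₘ Γ) Δ)) := by
  obtain ⟨hΓ, hΔ, u, hvu, hu⟩ := not_force_tau_up.mp h
  have hA : Force R V v A :=
    (not_force_tau_single.mp hu).1 A.bbox (Multiset.mem_cons_self _ _) v hvu
  refine not_force_tau_single.mpr ⟨fun B hB => ?_, hΔ⟩
  rcases Multiset.mem_cons.mp hB with rfl | hB
  · exact hA
  · exact hΓ B hB

end Forcing

/-- Soundness of the restart rule (■_L^2): if the conclusion
`G ⇗ Γ ⇒ Δ ↗ Θ,■A ⇒ Λ` is falsifiable, then the premiss `G ⇗ Γ,A ⇒ Δ`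
is falsifiable. -/
theorem bboxL2_sound (G : Ctx) (Γ Δ Θ Λ : Multiset Formula) (A : Formula)
    (h : Falsifiable (plug G (.up Γ Δ (.single (A.bbox ::ₘ Θ) Λ)))) :
    Falsifiable (plug G (.single (A ::ₘ Γ) Δ)) := by
  obtain ⟨W, hW, R, V, w, hw⟩ := h
  exact ⟨W, hW, R, V, w,
    not_force_tau_plug_of_forall (fun _ => not_force_tau_cons_of_not_force_tau_up_bbox) G w hw⟩
end

section
/- Every linear nested sequent derivable in LNS_Kt is derivable in LNS_Kt*; consequently, if LNS_Kt is cut-free complete for the tense logic Kt (i.e., every valid formula φ built from atoms, ⊥, →, □, ■ has a derivable sequent ε ⇒ φ), then so is LNS_Kt*. -/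
/-- The calculus LNS_Kt. -/
inductive Deriv : LNS → Prop
  | id (G : Ctx) (Γ Δ : Multiset Formula) (p : ℕ) :
      Deriv (plug G (.single (.atom p ::ₘ Γ) (.atom p ::ₘ Δ)))
  | botL (G : Ctx) (Γ Δ : Multiset Formula) :
      Deriv (plug G (.single (.bot ::ₘ Γ) Δ))
  | ew (G : Ctx) (Θ Λ : Multiset Formula) (d : Dir) (Γ Δ : Multiset Formula) :
      Deriv (plug G (.single Θ Λ)) →
      Deriv (plug (G ++ [(Θ, Λ, d)]) (.single Γ Δ))
  | impR (G : Ctx) (Γ Δ : Multiset Formula) (A B : Formula) :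
      Deriv (plug G (.single (A ::ₘ Γ) (B ::ₘ A.imp B ::ₘ Δ))) →
      Deriv (plug G (.single Γ (A.imp B ::ₘ Δ)))
  | impL (G : Ctx) (Γ Δ : Multiset Formula) (A B : Formula) :
      Deriv (plug G (.single (B ::ₘ A.imp B ::ₘ Γ) Δ)) →
      Deriv (plug G (.single (A.imp B ::ₘ Γ) (A ::ₘ Δ))) →
      Deriv (plug G (.single (A.imp B ::ₘ Γ) Δ))
  | boxR1 (G : Ctx) (Γ Δ Θ Λ : Multiset Formula) (A : Formula) :
      Deriv (plug G (.dn Γ (A ::ₘ Δ) (.single Θ (A.box ::ₘ Λ)))) →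
      Deriv (plug G (.dn Γ Δ (.up Θ (A.box ::ₘ Λ) (.single 0 {A})))) →
      Deriv (plug G (.dn Γ Δ (.single Θ (A.box ::ₘ Λ))))
  | bboxR1 (G : Ctx) (Γ Δ Θ Λ : Multiset Formula) (A : Formula) :
      Deriv (plug G (.up Γ (A ::ₘ Δ) (.single Θ (A.bbox ::ₘ Λ)))) →
      Deriv (plug G (.up Γ Δ (.dn Θ (A.bbox ::ₘ Λ) (.single 0 {A})))) →
      Deriv (plug G (.up Γ Δ (.single Θ (A.bbox ::ₘ Λ))))
  | boxR2 (G : Ctx) (Γ Δ : Multiset Formula) (A : Formula) :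
      lastDir G ≠ some Dir.dn →
      Deriv (plug G (.up Γ (A.box ::ₘ Δ) (.single 0 {A}))) →
      Deriv (plug G (.single Γ (A.box ::ₘ Δ)))
  | bboxR2 (G : Ctx) (Γ Δ : Multiset Formula) (A : Formula) :
      lastDir G ≠ some Dir.up →
      Deriv (plug G (.dn Γ (A.bbox ::ₘ Δ) (.single 0 {A}))) →
      Deriv (plug G (.single Γ (A.bbox ::ₘ Δ)))
  | boxL1 (G : Ctx) (Γ Δ Θ Λ : Multiset Formula) (A : Formula) :
      Deriv (plug G (.up (A.box ::ₘ Γ) Δ (.single (A ::ₘ Θ) Λ))) →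
      Deriv (plug G (.up (A.box ::ₘ Γ) Δ (.single Θ Λ)))
  | bboxL1 (G : Ctx) (Γ Δ Θ Λ : Multiset Formula) (A : Formula) :
      Deriv (plug G (.dn (A.bbox ::ₘ Γ) Δ (.single (A ::ₘ Θ) Λ))) →
      Deriv (plug G (.dn (A.bbox ::ₘ Γ) Δ (.single Θ Λ)))
  | boxL2 (G : Ctx) (Γ Δ Θ Λ : Multiset Formula) (A : Formula) :
      Deriv (plug G (.single (A ::ₘ Γ) Δ)) →
      Deriv (plug G (.dn Γ Δ (.single (A.box ::ₘ Θ) Λ)))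
  | bboxL2 (G : Ctx) (Γ Δ Θ Λ : Multiset Formula) (A : Formula) :
      Deriv (plug G (.single (A ::ₘ Γ) Δ)) →
      Deriv (plug G (.up Γ Δ (.single (A.bbox ::ₘ Θ) Λ)))

/-- The simplified calculus LNS_Kt*. -/
inductive DerivStar : LNS → Prop
  | id (G : Ctx) (Γ Δ : Multiset Formula) (p : ℕ) :
      DerivStar (plug G (.single (.atom p ::ₘ Γ) (.atom p ::ₘ Δ)))
  | botL (G : Ctx) (Γ Δ : Multiset Formula) :
      DerivStar (plug G (.single (.bot ::ₘ Γ) Δ))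
  | ew (G : Ctx) (Θ Λ : Multiset Formula) (d : Dir) (Γ Δ : Multiset Formula) :
      DerivStar (plug G (.single Θ Λ)) →
      DerivStar (plug (G ++ [(Θ, Λ, d)]) (.single Γ Δ))
  | impR (G : Ctx) (Γ Δ : Multiset Formula) (A B : Formula) :
      DerivStar (plug G (.single (A ::ₘ Γ) (B ::ₘ A.imp B ::ₘ Δ))) →
      DerivStar (plug G (.single Γ (A.imp B ::ₘ Δ)))
  | impL (G : Ctx) (Γ Δ : Multiset Formula) (A B : Formula) :
      DerivStar (plug G (.single (B ::ₘ A.imp B ::ₘ Γ) Δ)) →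
      DerivStar (plug G (.single (A.imp B ::ₘ Γ) (A ::ₘ Δ))) →
      DerivStar (plug G (.single (A.imp B ::ₘ Γ) Δ))
  | boxR (G : Ctx) (Γ Δ : Multiset Formula) (A : Formula) :
      DerivStar (plug G (.up Γ (A.box ::ₘ Δ) (.single 0 {A}))) →
      DerivStar (plug G (.single Γ (A.box ::ₘ Δ)))
  | bboxR (G : Ctx) (Γ Δ : Multiset Formula) (A : Formula) :
      DerivStar (plug G (.dn Γ (A.bbox ::ₘ Δ) (.single 0 {A}))) →
      DerivStar (plug G (.single Γ (A.bbox ::ₘ Δ)))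
  | boxL1 (G : Ctx) (Γ Δ Θ Λ : Multiset Formula) (A : Formula) :
      DerivStar (plug G (.up (A.box ::ₘ Γ) Δ (.single (A ::ₘ Θ) Λ))) →
      DerivStar (plug G (.up (A.box ::ₘ Γ) Δ (.single Θ Λ)))
  | bboxL1 (G : Ctx) (Γ Δ Θ Λ : Multiset Formula) (A : Formula) :
      DerivStar (plug G (.dn (A.bbox ::ₘ Γ) Δ (.single (A ::ₘ Θ) Λ))) →
      DerivStar (plug G (.dn (A.bbox ::ₘ Γ) Δ (.single Θ Λ)))
  | boxL2 (G : Ctx) (Γ Δ Θ Λ : Multiset Formula) (A : Formula) :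
      DerivStar (plug G (.single (A ::ₘ Γ) Δ)) →
      DerivStar (plug G (.dn Γ Δ (.single (A.box ::ₘ Θ) Λ)))
  | bboxL2 (G : Ctx) (Γ Δ Θ Λ : Multiset Formula) (A : Formula) :
      DerivStar (plug G (.single (A ::ₘ Γ) Δ)) →
      DerivStar (plug G (.up Γ Δ (.single (A.bbox ::ₘ Θ) Λ)))

/-! Every rule of LNS_Kt other than the right rules for □ and ■ is literally a rule of LNS_Kt*.
(□_R^2) and (■_R^2) are (□_R) and (■_R) with a side condition on the context, and the conclusion of
(□_R^1) is an instance of (□_R) in the context `G ↙ Γ ⇒ Δ`, obtained from its second premise alone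
(symmetrically for (■_R^1)). -/

theorem plug_append (G H : Ctx) (S : LNS) : plug (G ++ H) S = plug G (plug H S) := by
  induction G with
  | nil => rfl
  | cons c G ih =>
    obtain ⟨Γ, Δ, d⟩ := c
    cases d <;> simp only [List.cons_append, plug, ih]

theorem Deriv.derivStar {S : LNS} (h : Deriv S) : DerivStar S := by
  induction h with
  | id G Γ Δ p => exact .id G Γ Δ p
  | botL G Γ Δ => exact .botL G Γ Δ
  | ew G Θ Λ d Γ Δ _ ih => exact .ew G Θ Λ d Γ Δ ih
  | impR G Γ Δ A B _ ih => exact .impR G Γ Δ A B ih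
  | impL G Γ Δ A B _ _ ih₁ ih₂ => exact .impL G Γ Δ A B ih₁ ih₂
  | boxR1 G Γ Δ Θ Λ A _ _ _ ih =>
    have h := DerivStar.boxR (G ++ [(Γ, Δ, .dn)]) Θ Λ A (by rwa [plug_append])
    rwa [plug_append] at h
  | bboxR1 G Γ Δ Θ Λ A _ _ _ ih =>
    have h := DerivStar.bboxR (G ++ [(Γ, Δ, .up)]) Θ Λ A (by rwa [plug_append])
    rwa [plug_append] at h
  | boxR2 G Γ Δ A _ _ ih => exact .boxR G Γ Δ A ih
  | bboxR2 G Γ Δ A _ _ ih => exact .bboxR G Γ Δ A ih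
  | boxL1 G Γ Δ Θ Λ A _ ih => exact .boxL1 G Γ Δ Θ Λ A ih
  | bboxL1 G Γ Δ Θ Λ A _ ih => exact .bboxL1 G Γ Δ Θ Λ A ih
  | boxL2 G Γ Δ Θ Λ A _ ih => exact .boxL2 G Γ Δ Θ Λ A ih
  | bboxL2 G Γ Δ Θ Λ A _ ih => exact .bboxL2 G Γ Δ Θ Λ A ih

/-- Every sequent derivable in LNS_Kt is derivable in LNS_Kt*; hence if LNS_Kt
is cut-free complete for Kt, then so is LNS_Kt*. -/
theorem lnskt_to_star :
    (∀ S : LNS, Deriv S → DerivStar S) ∧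
    ((∀ φ : Formula, φ.NoDia → Valid φ → Deriv (LNS.single 0 {φ})) →
      (∀ φ : Formula, φ.NoDia → Valid φ → DerivStar (LNS.single 0 {φ}))) :=
  ⟨fun _ => Deriv.derivStar, fun complete φ hφ hvalid => (complete φ hφ hvalid).derivStar⟩
end
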